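/- Let A be an integral domain with fraction field K, M a nonzero submodule of A[[x]]^p, (α_i,j_i), i = 1,…,q, the vertices of the diagram N(M), and Φ_i ∈ M with exp Φ_i = (α_i,j_i). Let Δ_1,…,Δ_q,Δ be the associated partition of ℕ^n×{1,…,p}, S the multiplicative subset of A generated by the initial coefficients of Φ_1,…,Φ_q, and B any subring of K containing S^{-1}A. Then: (a) N(M) = Δ_1 ∪ ⋯ ∪ Δ_q; (b) Φ_1,…,Φ_q generate B[[x]]·M, the B[[x]]-submodule of B[[x]]^p generated by M; (c) for G ∈ B[[x]]^p, G ∈ B[[x]]·M if and only if the remainder R(G) of the formal division of G by Φ_1,…,Φ_q equals 0. -/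

import Mathlib

namespace QDiv

/-- Index set ℕ^n × {1,…,p}. -/
abbrev Idx (n p : ℕ) := (Fin n →₀ ℕ) × Fin p

variable {n p q : ℕ}

/-- Value of the positive linear form `L` on a multi-index. -/
noncomputable def lval (L : Fin n → ℝ) (α : Fin n →₀ ℕ) : ℝ := ∑ i, L i * (α i : ℝ)

/-- Lexicographic order on multi-indices. -/
def mlexLt (a b : Fin n →₀ ℕ) : Prop := ∃ i : Fin n, (∀ j < i, a j = b j) ∧ a i < b i

/-- The order on `ℕ^n` given by comparing `(L α, α)` lexicographically. -/
def sLt (L : Fin n → ℝ) (a b : Fin n →₀ ℕ) : Prop :=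
  lval L a < lval L b ∨ (lval L a = lval L b ∧ mlexLt a b)

/-- The total order on `ℕ^n × {1,…,p}` given by comparing `(L α, j, α)` lexicographically. -/
def idxLt (L : Fin n → ℝ) (a b : Idx n p) : Prop :=
  lval L a.1 < lval L b.1 ∨
    (lval L a.1 = lval L b.1 ∧ (a.2 < b.2 ∨ (a.2 = b.2 ∧ mlexLt a.1 b.1)))

def idxLe (L : Fin n → ℝ) (a b : Idx n p) : Prop := ¬ idxLt L b a

section CommRing

variable {A : Type*} [CommRing A]

/-- The support of a `p`-tuple of formal power series. -/
def suppT (F : Fin p → MvPowerSeries (Fin n) A) : Set (Idx n p) :=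
  {e | MvPowerSeries.coeff e.1 (F e.2) ≠ 0}

/-- The support of a single formal power series. -/
def suppS (f : MvPowerSeries (Fin n) A) : Set (Fin n →₀ ℕ) :=
  {α | MvPowerSeries.coeff α f ≠ 0}

/-- `e` is the initial exponent `exp F` of the tuple `F`. -/
def IsExp (L : Fin n → ℝ) (F : Fin p → MvPowerSeries (Fin n) A) (e : Idx n p) : Prop :=
  e ∈ suppT F ∧ ∀ d ∈ suppT F, ¬ idxLt L d e

/-- `β` is the initial exponent of the scalar series `f`. -/
def IsExpS (L : Fin n → ℝ) (f : MvPowerSeries (Fin n) A) (β : Fin n →₀ ℕ) : Prop :=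
  β ∈ suppS f ∧ ∀ γ ∈ suppS f, ¬ sLt L γ β

/-- The diagram of initial exponents `N(M)` of a submodule `M ⊆ A[[x]]^p`. -/
def diagram (L : Fin n → ℝ)
    (M : Submodule (MvPowerSeries (Fin n) A) (Fin p → MvPowerSeries (Fin n) A)) :
    Set (Idx n p) :=
  {e | ∃ F ∈ M, IsExp L F e}

/-- `N + ℕ^n`. -/
def shift (N : Set (Idx n p)) : Set (Idx n p) :=
  {e | ∃ d ∈ N, ∃ β : Fin n →₀ ℕ, e = (d.1 + β, d.2)}

/-- A vertex of a diagram `N`. -/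
def IsVertex (N : Set (Idx n p)) (e : Idx n p) : Prop :=
  e ∈ N ∧ shift (N \ {e}) ≠ N

/-- The "cone" `(α,j) + ℕ^n` over a single index. -/
def cone (d : Idx n p) : Set (Idx n p) :=
  {e | e.2 = d.2 ∧ ∃ β : Fin n →₀ ℕ, e.1 = d.1 + β}

/-- The pieces `Δ_i` of the partition of `ℕ^n × {1,…,p}` associated with
initial exponents `v 1, …, v q`. -/
def Delta (v : Fin q → Idx n p) (i : Fin q) : Set (Idx n p) :=
  cone (v i) \ ⋃ (k : Fin q) (_ : k < i), cone (v k)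

/-- The remaining piece `Δ` of the partition. -/
def DeltaC (v : Fin q → Idx n p) : Set (Idx n p) := (⋃ i, cone (v i))ᶜ

/-- The monomial tuple `x^{(α,j)}`. -/
noncomputable def xMon (e : Idx n p) : Fin p → MvPowerSeries (Fin n) A := fun j =>
  if j = e.2 then MvPowerSeries.monomial e.1 1 else 0

/-- All coefficients of a scalar series satisfy a predicate `P`
(e.g. membership in a subring of `K`). -/
def coeffsIn (P : A → Prop) (f : MvPowerSeries (Fin n) A) : Prop :=
  ∀ α : Fin n →₀ ℕ, P (MvPowerSeries.coeff α f)

/-- All coefficients of a tuple of series satisfy `P`. -/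
def coeffsInT (P : A → Prop) (F : Fin p → MvPowerSeries (Fin n) A) : Prop :=
  ∀ j, coeffsIn P (F j)

/-- `G` belongs to the `B[[x]]`-submodule of `B[[x]]^p` generated by the set `Mset`,
where `B[[x]]` is the ring of series all of whose coefficients satisfy `P`. -/
def inSpanP (P : A → Prop) (Mset : Set (Fin p → MvPowerSeries (Fin n) A))
    (G : Fin p → MvPowerSeries (Fin n) A) : Prop :=
  ∃ (k : ℕ) (c : Fin k → MvPowerSeries (Fin n) A)
    (m : Fin k → (Fin p → MvPowerSeries (Fin n) A)),
    (∀ l, coeffsIn P (c l)) ∧ (∀ l, m l ∈ Mset) ∧ ∀ j, G j = ∑ l, c l * m l j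

/-- Membership in the image of the localization `S⁻¹A` inside the fraction field `K`. -/
def locMem {K : Type*} [Field K] [Algebra A K] (S : Submonoid A) (x : K) : Prop :=
  ∃ a : A, ∃ s ∈ S, x * algebraMap A K s = algebraMap A K a

/-- The multiplicative subset generated by the initial coefficients of `Φ_1,…,Φ_q`, given
their initial exponents `v i`. -/
def initCoeffMonoid (Φ : Fin q → (Fin p → MvPowerSeries (Fin n) A)) (v : Fin q → Idx n p) :
    Submonoid A :=
  Submonoid.closure (Set.range fun i => MvPowerSeries.coeff (v i).1 (Φ i (v i).2))

/-- Strict order on diagrams: lexicographic comparison of the increasing sequences of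
vertices (padded by `∞`). Equivalently: the smallest index at which the vertex sets
differ is a vertex of the first diagram. -/
def DiagLT (L : Fin n → ℝ) (N₁ N₂ : Set (Idx n p)) : Prop :=
  ∃ e, IsVertex N₁ e ∧ ¬ IsVertex N₂ e ∧ ∀ d, idxLt L d e → (IsVertex N₁ d ↔ IsVertex N₂ d)

/-- Order on diagrams. -/
def DiagLE (L : Fin n → ℝ) (N₁ N₂ : Set (Idx n p)) : Prop :=
  (∀ e, IsVertex N₁ e ↔ IsVertex N₂ e) ∨ DiagLT L N₁ N₂

end CommRing

end QDiv

namespace QDiv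

variable {n p q : ℕ}

theorem lval_nonneg {L : Fin n → ℝ} (hL : ∀ i, 0 < L i) (α : Fin n →₀ ℕ) : 0 ≤ lval L α :=
  Finset.sum_nonneg fun i _ => mul_nonneg (hL i).le (Nat.cast_nonneg _)

theorem lval_add (L : Fin n → ℝ) (a b : Fin n →₀ ℕ) :
    lval L (a + b) = lval L a + lval L b := by
  simp only [lval, Finsupp.add_apply, Nat.cast_add, mul_add, Finset.sum_add_distrib]

theorem lval_pos {L : Fin n → ℝ} (hL : ∀ i, 0 < L i) {β : Fin n →₀ ℕ} (hβ : β ≠ 0) :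
    0 < lval L β := by
  obtain ⟨i, hi⟩ := Finsupp.ne_iff.1 hβ
  refine Finset.sum_pos' (fun i _ => mul_nonneg (hL i).le (Nat.cast_nonneg _)) ⟨i, Finset.mem_univ i, ?_⟩
  have : 0 < β i := Nat.pos_of_ne_zero (by simpa using hi)
  exact mul_pos (hL i) (by exact_mod_cast this)

theorem lval_mono {L : Fin n → ℝ} (hL : ∀ i, 0 < L i) {a b : Fin n →₀ ℕ} (h : a ≤ b) :
    lval L a ≤ lval L b := by
  refine Finset.sum_le_sum fun i _ => ?_
  have := Finsupp.le_def.1 h i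
  exact mul_le_mul_of_nonneg_left (by exact_mod_cast this) (hL i).le

theorem mlexLt_irrefl (a : Fin n →₀ ℕ) : ¬ mlexLt a a := by
  rintro ⟨i, -, hi⟩; exact lt_irrefl _ hi

theorem mlexLt_total {a b : Fin n →₀ ℕ} (h : a ≠ b) : mlexLt a b ∨ mlexLt b a := by
  classical
  have hne : (Finset.univ.filter (fun i => a i ≠ b i)).Nonempty := by
    obtain ⟨i, hi⟩ := Finsupp.ne_iff.1 h
    exact ⟨i, by simp [hi]⟩
  set s := Finset.univ.filter (fun i => a i ≠ b i) with hs
  set i0 := s.min' hne with hi0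
  have hmem : i0 ∈ s := s.min'_mem hne
  have hne0 : a i0 ≠ b i0 := by simpa [hs] using hmem
  have hpre : ∀ j < i0, a j = b j := by
    intro j hj
    by_contra hne'
    exact absurd (s.min'_le j (by simp [hs, hne'])) (not_le.2 hj)
  rcases lt_or_gt_of_ne hne0 with h' | h'
  · exact Or.inl ⟨i0, hpre, h'⟩
  · exact Or.inr ⟨i0, fun j hj => (hpre j hj).symm, h'⟩

theorem mlexLt_trans {a b c : Fin n →₀ ℕ} (h1 : mlexLt a b) (h2 : mlexLt b c) :
    mlexLt a c := by
  obtain ⟨i, hpre, hi⟩ := h1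
  obtain ⟨i', hpre', hi'⟩ := h2
  rcases lt_trichotomy i i' with h | h | h
  · exact ⟨i, fun j hj => (hpre j hj).trans (hpre' j (hj.trans h)), hi.trans_le (hpre' i h).le⟩
  · subst h; exact ⟨i, fun j hj => (hpre j hj).trans (hpre' j hj), hi.trans hi'⟩
  · exact ⟨i', fun j hj => (hpre j (hj.trans h)).trans (hpre' j hj), (hpre i' h).le.trans_lt hi'⟩

theorem mlexLt_asymm {a b : Fin n →₀ ℕ} (h1 : mlexLt a b) (h2 : mlexLt b a) : False :=
  mlexLt_irrefl a (mlexLt_trans h1 h2)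

theorem mlexLt_add_iff {a b γ : Fin n →₀ ℕ} : mlexLt (a + γ) (b + γ) ↔ mlexLt a b := by
  constructor
  · rintro ⟨i, hpre, hi⟩
    refine ⟨i, fun j hj => ?_, ?_⟩
    · have := hpre j hj; simpa [Finsupp.add_apply] using this
    · have := hi; simp only [Finsupp.add_apply] at this; omega
  · rintro ⟨i, hpre, hi⟩
    exact ⟨i, fun j hj => by simp [Finsupp.add_apply, hpre j hj], by
      simp only [Finsupp.add_apply]; omega⟩

theorem idxLt_irrefl (L : Fin n → ℝ) (a : Idx n p) : ¬ idxLt L a a := by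
  rintro (h | ⟨-, h | ⟨-, h⟩⟩)
  · exact lt_irrefl _ h
  · exact lt_irrefl _ h
  · exact mlexLt_irrefl _ h

theorem idxLt_trans {L : Fin n → ℝ} {a b c : Idx n p}
    (h1 : idxLt L a b) (h2 : idxLt L b c) : idxLt L a c := by
  rcases h1 with h1 | ⟨e1, h1⟩ <;> rcases h2 with h2 | ⟨e2, h2⟩
  · exact Or.inl (h1.trans h2)
  · exact Or.inl (e2 ▸ h1)
  · exact Or.inl (e1 ▸ h2)
  · refine Or.inr ⟨e1.trans e2, ?_⟩
    rcases h1 with h1 | ⟨j1, h1⟩ <;> rcases h2 with h2 | ⟨j2, h2⟩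
    · exact Or.inl (h1.trans h2)
    · exact Or.inl (j2 ▸ h1)
    · exact Or.inl (j1 ▸ h2)
    · exact Or.inr ⟨j1.trans j2, mlexLt_trans h1 h2⟩

theorem idxLt_total {L : Fin n → ℝ} {a b : Idx n p} (h : a ≠ b) :
    idxLt L a b ∨ idxLt L b a := by
  rcases lt_trichotomy (lval L a.1) (lval L b.1) with hv | hv | hv
  · exact Or.inl (Or.inl hv)
  · rcases lt_trichotomy a.2 b.2 with hj | hj | hj
    · exact Or.inl (Or.inr ⟨hv, Or.inl hj⟩)
    · have hab : a.1 ≠ b.1 := by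
        intro h1; exact h (Prod.ext h1 hj)
      rcases mlexLt_total hab with hm | hm
      · exact Or.inl (Or.inr ⟨hv, Or.inr ⟨hj, hm⟩⟩)
      · exact Or.inr (Or.inr ⟨hv.symm, Or.inr ⟨hj.symm, hm⟩⟩)
    · exact Or.inr (Or.inr ⟨hv.symm, Or.inl hj⟩)
  · exact Or.inr (Or.inl hv)

theorem idxLt_asymm {L : Fin n → ℝ} {a b : Idx n p}
    (h1 : idxLt L a b) (h2 : idxLt L b a) : False :=
  idxLt_irrefl L a (idxLt_trans h1 h2)

theorem idxLt_add_iff {L : Fin n → ℝ} {a b : Idx n p} (γ : Fin n →₀ ℕ) :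
    idxLt L (a.1 + γ, a.2) (b.1 + γ, b.2) ↔ idxLt L a b := by
  simp only [idxLt, lval_add, add_lt_add_iff_right, add_left_inj, mlexLt_add_iff]

theorem idxLt_self_add {L : Fin n → ℝ} (hL : ∀ i, 0 < L i) (a : Idx n p)
    {γ : Fin n →₀ ℕ} (hγ : γ ≠ 0) : idxLt L a (a.1 + γ, a.2) :=
  Or.inl (by simpa [lval_add] using lval_pos hL hγ)

theorem lval_le_of_idxLt {L : Fin n → ℝ} {a b : Idx n p} (h : idxLt L a b) :
    lval L a.1 ≤ lval L b.1 := by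
  rcases h with h | ⟨h, -⟩
  · exact h.le
  · exact h.le

theorem finite_lval_le {L : Fin n → ℝ} (hL : ∀ i, 0 < L i) (C : ℝ) :
    {α : Fin n →₀ ℕ | lval L α ≤ C}.Finite := by
  set bound : Fin n →₀ ℕ := Finsupp.equivFunOnFinite.symm (fun i => ⌊C / L i⌋₊) with hb
  refine (Set.finite_Iic bound).subset fun α hα => ?_
  simp only [Set.mem_setOf_eq] at hα
  refine Set.mem_Iic.2 (Finsupp.le_def.2 fun i => ?_)
  have hterm : L i * (α i : ℝ) ≤ C := by
    refine le_trans ?_ hα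
    exact Finset.single_le_sum (f := fun i => L i * (α i : ℝ))
      (fun i _ => mul_nonneg (hL i).le (Nat.cast_nonneg _)) (Finset.mem_univ i)
  have : (α i : ℝ) ≤ C / L i := (le_div_iff₀' (hL i)).2 hterm
  have : α i ≤ ⌊C / L i⌋₊ := Nat.le_floor this
  simpa [hb] using this

theorem finite_pred {L : Fin n → ℝ} (hL : ∀ i, 0 < L i) (e : Idx n p) :
    {d : Idx n p | idxLt L d e}.Finite := by
  refine (((finite_lval_le hL (lval L e.1)).prod (Set.finite_univ (α := Fin p)))).subset ?_
  rintro d hd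
  exact ⟨lval_le_of_idxLt hd, Set.mem_univ _⟩

noncomputable def mu (L : Fin n → ℝ) (e : Idx n p) : ℕ := {d : Idx n p | idxLt L d e}.ncard

theorem mu_lt_mu {L : Fin n → ℝ} (hL : ∀ i, 0 < L i) {a b : Idx n p}
    (h : idxLt L a b) : mu L a < mu L b := by
  refine Set.ncard_lt_ncard ⟨fun d hd => idxLt_trans hd h, ?_⟩ (finite_pred hL b)
  intro hsub
  exact idxLt_irrefl L a (hsub h)

theorem idxLt_wf {L : Fin n → ℝ} (hL : ∀ i, 0 < L i) :
    WellFounded (idxLt L (p := p)) :=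
  Subrelation.wf (fun {a b} h => mu_lt_mu hL h) (InvImage.wf (mu L) Nat.lt_wfRel.wf)

section CommRingOrd

variable {A : Type*} [CommRing A]

theorem exists_isExp_of_mem {L : Fin n → ℝ} (hL : ∀ i, 0 < L i)
    {F : Fin p → MvPowerSeries (Fin n) A} {d : Idx n p} (hd : d ∈ suppT F) :
    ∃ e, IsExp L F e := by
  obtain ⟨e, he, hmin⟩ := (idxLt_wf hL).has_min (suppT F) ⟨d, hd⟩
  exact ⟨e, he, hmin⟩

end CommRingOrd


variable {n p q : ℕ}

theorem mem_cone_self (d : Idx n p) : d ∈ cone d :=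
  ⟨rfl, 0, by simp⟩

theorem cone_trans {d e f : Idx n p} (he : e ∈ cone d) (hf : f ∈ cone e) : f ∈ cone d := by
  obtain ⟨hj, β, hβ⟩ := he
  obtain ⟨hj', γ, hγ⟩ := hf
  exact ⟨hj'.trans hj, β + γ, by rw [hγ, hβ, add_assoc]⟩

theorem eq_or_idxLt_of_mem_cone {L : Fin n → ℝ} (hL : ∀ i, 0 < L i) {d e : Idx n p}
    (he : e ∈ cone d) : e = d ∨ idxLt L d e := by
  obtain ⟨hj, β, hβ⟩ := he
  rcases eq_or_ne β 0 with h0 | h0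
  · left; exact Prod.ext (by simp [hβ, h0]) hj
  · right
    have := idxLt_self_add hL d (γ := β) h0
    have he' : e = (d.1 + β, d.2) := Prod.ext hβ hj
    rwa [← he'] at this

section CommRingD

variable {A : Type*} [CommRing A]

theorem suppT_monomial_smul {β : Fin n →₀ ℕ} {F : Fin p → MvPowerSeries (Fin n) A}
    (d : Idx n p) :
    d ∈ suppT (MvPowerSeries.monomial β (1 : A) • F) ↔
      β ≤ d.1 ∧ (d.1 - β, d.2) ∈ suppT F := by
  have : (MvPowerSeries.monomial β (1 : A) • F) d.2
      = MvPowerSeries.monomial β (1 : A) * F d.2 := rfl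
  simp only [suppT, Set.mem_setOf_eq, this, MvPowerSeries.coeff_monomial_mul]
  by_cases h : β ≤ d.1 <;> simp [h]

theorem isExp_monomial_smul {L : Fin n → ℝ} {F : Fin p → MvPowerSeries (Fin n) A}
    {e : Idx n p} (he : IsExp L F e) (β : Fin n →₀ ℕ) :
    IsExp L (MvPowerSeries.monomial β (1 : A) • F) (e.1 + β, e.2) := by
  obtain ⟨hmem, hmin⟩ := he
  constructor
  · rw [suppT_monomial_smul]
    refine ⟨le_add_self, ?_⟩
    simpa [add_tsub_cancel_right] using hmem
  · rintro d hd hlt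
    rw [suppT_monomial_smul] at hd
    obtain ⟨hle, hsupp⟩ := hd
    have hd1 : d.1 = (d.1 - β) + β := (tsub_add_cancel_of_le hle).symm
    have : idxLt L ((d.1 - β) + β, d.2) (e.1 + β, e.2) := by rwa [← hd1]
    rw [idxLt_add_iff (a := (d.1 - β, d.2)) (b := e)] at this
    exact hmin _ hsupp this

theorem cone_subset_diagram {L : Fin n → ℝ}
    {M : Submodule (MvPowerSeries (Fin n) A) (Fin p → MvPowerSeries (Fin n) A)}
    {Φ : Fin p → MvPowerSeries (Fin n) A} {d : Idx n p}
    (hΦM : Φ ∈ M) (hexp : IsExp L Φ d) : cone d ⊆ diagram L M := by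
  rintro e ⟨hj, β, hβ⟩
  refine ⟨MvPowerSeries.monomial β (1 : A) • Φ, M.smul_mem _ hΦM, ?_⟩
  have := isExp_monomial_smul hexp β
  have he : e = (d.1 + β, d.2) := Prod.ext hβ hj
  rwa [← he] at this

/-- An element of the diagram minimal w.r.t. cone-divisibility is a vertex. -/
theorem isVertex_of_min {L : Fin n → ℝ}
    {M : Submodule (MvPowerSeries (Fin n) A) (Fin p → MvPowerSeries (Fin n) A)}
    {e : Idx n p} (he : e ∈ diagram L M)
    (hmin : ∀ d ∈ diagram L M, e ∈ cone d → d = e) :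
    IsVertex (diagram L M) e := by
  refine ⟨he, fun hEq => ?_⟩
  have : e ∈ shift (diagram L M \ {e}) := hEq.symm ▸ he
  obtain ⟨d, ⟨hd, hdne⟩, β, hβ⟩ := this
  have : e ∈ cone d := ⟨by rw [hβ], β, by rw [hβ]⟩
  exact hdne (hmin d hd this)

/-- Degree sum. -/
def nu (e : Idx n p) : ℕ := ∑ i, e.1 i

theorem diagram_subset_cones {L : Fin n → ℝ}
    {M : Submodule (MvPowerSeries (Fin n) A) (Fin p → MvPowerSeries (Fin n) A)}
    {v : Fin q → Idx n p}
    (hvert : ∀ e : Idx n p, IsVertex (diagram L M) e ↔ ∃ i, v i = e) :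
    diagram L M ⊆ ⋃ i, cone (v i) := by
  suffices h : ∀ N, ∀ e, e ∈ diagram L M → nu e ≤ N → e ∈ ⋃ i, cone (v i) by
    intro e he; exact h (nu e) e he le_rfl
  intro N
  induction N with
  | zero =>
    intro e he hN
    by_cases hmin : ∀ d ∈ diagram L M, e ∈ cone d → d = e
    · obtain ⟨i, hi⟩ := (hvert e).1 (isVertex_of_min he hmin)
      exact Set.mem_iUnion.2 ⟨i, hi ▸ mem_cone_self e⟩
    · push_neg at hmin
      obtain ⟨d, hd, hcone, hne⟩ := hmin
      exfalso
      obtain ⟨hj, β, hβ⟩ := hcone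
      have hβ0 : β ≠ 0 := by
        rintro rfl
        exact hne (Prod.ext (by simp [hβ]) hj).symm
      obtain ⟨i, hi⟩ := Finsupp.ne_iff.1 hβ0
      have hpos : 0 < β i := Nat.pos_of_ne_zero (by simpa using hi)
      have hnu : 0 < nu e := by
        have : 0 < e.1 i := by rw [hβ]; simp; omega
        exact Finset.sum_pos' (fun _ _ => Nat.zero_le _) ⟨i, Finset.mem_univ i, this⟩
      omega
  | succ N ih =>
    intro e he hN
    by_cases hmin : ∀ d ∈ diagram L M, e ∈ cone d → d = e
    · obtain ⟨i, hi⟩ := (hvert e).1 (isVertex_of_min he hmin)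
      exact Set.mem_iUnion.2 ⟨i, hi ▸ mem_cone_self e⟩
    · push_neg at hmin
      obtain ⟨d, hd, hcone, hne⟩ := hmin
      obtain ⟨hj, β, hβ⟩ := hcone
      have hβ0 : β ≠ 0 := by
        rintro rfl
        exact hne (Prod.ext (by simp [hβ]) hj).symm
      have hnud : nu d < nu e := by
        obtain ⟨i, hi⟩ := Finsupp.ne_iff.1 hβ0
        have hpos : 0 < β i := Nat.pos_of_ne_zero (by simpa using hi)
        have hsum : nu e = nu d + ∑ i, β i := by
          simp only [nu, hβ, Finsupp.add_apply, Finset.sum_add_distrib]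
        have hpos' : 0 < ∑ i, β i :=
          Finset.sum_pos' (fun _ _ => Nat.zero_le _) ⟨i, Finset.mem_univ i, hpos⟩
        omega
      have := ih d hd (by omega)
      obtain ⟨s, hs⟩ := Set.mem_iUnion.1 this
      exact Set.mem_iUnion.2 ⟨s, cone_trans hs ⟨hj, β, hβ⟩⟩

theorem mem_delta_of_mem_cone {v : Fin q → Idx n p} {e : Idx n p}
    (h : ∃ i, e ∈ cone (v i)) : ∃ i, e ∈ Delta v i := by
  classical
  obtain ⟨i, hi⟩ := h
  have hne : (Finset.univ.filter (fun k => e ∈ cone (v k))).Nonempty := ⟨i, by simp [hi]⟩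
  set i0 := (Finset.univ.filter (fun k => e ∈ cone (v k))).min' hne with hi0
  have hmem : e ∈ cone (v i0) := by
    have := Finset.min'_mem _ hne
    simpa using this
  refine ⟨i0, hmem, ?_⟩
  intro hbad
  simp only [Set.mem_iUnion] at hbad
  obtain ⟨k, hk, hck⟩ := hbad
  have : i0 ≤ k := Finset.min'_le _ k (by simp [hck])
  exact absurd hk (not_lt.2 this)

theorem iUnion_delta_eq_cones (v : Fin q → Idx n p) :
    (⋃ i, Delta v i) = ⋃ i, cone (v i) := by
  apply Set.Subset.antisymm
  · refine Set.iUnion_subset fun i => ?_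
    exact (Set.diff_subset).trans (Set.subset_iUnion (fun i => cone (v i)) i)
  · intro e he
    obtain ⟨i, hi⟩ := Set.mem_iUnion.1 he
    obtain ⟨k, hk⟩ := mem_delta_of_mem_cone ⟨i, hi⟩
    exact Set.mem_iUnion.2 ⟨k, hk⟩

theorem delta_disjoint {v : Fin q → Idx n p} {e : Idx n p} {i k : Fin q}
    (hi : e ∈ Delta v i) (hk : e ∈ Delta v k) : i = k := by
  by_contra hne
  rcases lt_or_gt_of_ne hne with h | h
  · exact hk.2 (Set.mem_iUnion.2 ⟨i, Set.mem_iUnion.2 ⟨h, hi.1⟩⟩)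
  · exact hi.2 (Set.mem_iUnion.2 ⟨k, Set.mem_iUnion.2 ⟨h, hk.1⟩⟩)

/-- Part (a). -/
theorem part_a {L : Fin n → ℝ}
    {M : Submodule (MvPowerSeries (Fin n) A) (Fin p → MvPowerSeries (Fin n) A)}
    {v : Fin q → Idx n p}
    (hvert : ∀ e : Idx n p, IsVertex (diagram L M) e ↔ ∃ i, v i = e)
    {Φ : Fin q → (Fin p → MvPowerSeries (Fin n) A)}
    (hΦM : ∀ i, Φ i ∈ M) (hΦexp : ∀ i, IsExp L (Φ i) (v i)) :
    diagram L M = ⋃ i, Delta v i := by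
  rw [iUnion_delta_eq_cones]
  apply Set.Subset.antisymm
  · exact diagram_subset_cones hvert
  · exact Set.iUnion_subset fun i => cone_subset_diagram (hΦM i) (hΦexp i)

end CommRingD


variable {n p q : ℕ}

open MvPowerSeries

/-- Truncation of `g` to a finite set of exponents behaves correctly against
multiplication, when all exponents `≤ δ` belong to `T`. -/
theorem coeff_trunc_mul {K : Type*} [CommRing K] (g f : MvPowerSeries (Fin n) K)
    (T : Finset (Fin n →₀ ℕ)) (δ : Fin n →₀ ℕ) (hδ : ∀ x ≤ δ, x ∈ T) :
    (MvPowerSeries.coeff δ) ((∑ β ∈ T, MvPowerSeries.monomial β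
        ((MvPowerSeries.coeff β) g)) * f) = MvPowerSeries.coeff δ (g * f) := by
  classical
  rw [Finset.sum_mul, map_sum]
  rw [MvPowerSeries.coeff_mul]
  have : ∀ β ∈ T, (MvPowerSeries.coeff δ) (MvPowerSeries.monomial β
      ((MvPowerSeries.coeff β) g) * f) =
      if β ≤ δ then (MvPowerSeries.coeff β) g * (MvPowerSeries.coeff (δ - β)) f else 0 :=
    fun β _ => MvPowerSeries.coeff_monomial_mul _ _ _ _
  rw [Finset.sum_congr rfl this, Finset.sum_ite, Finset.sum_const_zero, add_zero]
  refine Finset.sum_nbij' (fun β => (β, δ - β)) (fun x => x.1) ?_ ?_ ?_ ?_ ?_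
  · intro β hβ
    simp only [Finset.mem_filter] at hβ
    exact Finset.HasAntidiagonal.mem_antidiagonal.2 (add_tsub_cancel_of_le hβ.2)
  · intro x hx
    have hx' := Finset.HasAntidiagonal.mem_antidiagonal.1 hx
    have hle : x.1 ≤ δ := le_iff_exists_add.2 ⟨x.2, hx'.symm⟩
    exact Finset.mem_filter.2 ⟨hδ _ hle, hle⟩
  · intro β hβ; rfl
  · intro x hx
    have hx' := Finset.HasAntidiagonal.mem_antidiagonal.1 hx
    have : δ - x.1 = x.2 := by rw [← hx', add_tsub_cancel_left]
    exact Prod.ext rfl this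
  · intro β hβ; rfl

/-- Lemma X: the initial exponent of a nonzero `K[[x]]`-linear combination of
elements of `M` belongs to `N(M)`. -/
theorem exp_mem_diagram
    {A : Type*} [CommRing A] [IsDomain A]
    {K : Type*} [Field K] [Algebra A K] [IsFractionRing A K]
    {L : Fin n → ℝ} (hL : ∀ i, 0 < L i)
    {M : Submodule (MvPowerSeries (Fin n) A) (Fin p → MvPowerSeries (Fin n) A)}
    {k : ℕ} (c : Fin k → MvPowerSeries (Fin n) K)
    (F : Fin k → (Fin p → MvPowerSeries (Fin n) A))
    (hF : ∀ l, F l ∈ M) {e : Idx n p}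
    (he : IsExp L (fun j => ∑ l, c l * MvPowerSeries.map (algebraMap A K) (F l j)) e) :
    e ∈ diagram L M := by
  classical
  set H : Fin p → MvPowerSeries (Fin n) K :=
    fun j => ∑ l, c l * MvPowerSeries.map (algebraMap A K) (F l j) with hH
  set lam := lval L e.1 with hlam
  set T : Finset (Fin n →₀ ℕ) := (finite_lval_le hL lam).toFinset with hT
  have hTmem : ∀ x : Fin n →₀ ℕ, lval L x ≤ lam → x ∈ T := by
    intro x hx; simp [hT, hx]
  set H' : Fin p → MvPowerSeries (Fin n) K := fun j => ∑ l,
    (∑ β ∈ T, MvPowerSeries.monomial β ((MvPowerSeries.coeff β) (c l))) *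
      MvPowerSeries.map (algebraMap A K) (F l j) with hH'
  -- Claim 1 : coefficients of H' and H agree below lam
  have claim1 : ∀ d : Idx n p, lval L d.1 ≤ lam →
      MvPowerSeries.coeff d.1 (H' d.2) = MvPowerSeries.coeff d.1 (H d.2) := by
    intro d hd
    rw [hH, hH', map_sum, map_sum]
    refine Finset.sum_congr rfl fun l _ => ?_
    refine coeff_trunc_mul _ _ _ _ fun x hx => hTmem x ?_
    exact (lval_mono hL hx).trans hd
  -- Claim 2 : IsExp L H' e
  have claim2 : IsExp L H' e := by
    constructor
    · show MvPowerSeries.coeff e.1 (H' e.2) ≠ 0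
      rw [claim1 e le_rfl]
      exact he.1
    · intro d hd hlt
      have hle : lval L d.1 ≤ lam := hlam ▸ lval_le_of_idxLt hlt
      have : d ∈ suppT H := by
        show MvPowerSeries.coeff d.1 (H d.2) ≠ 0
        rw [← claim1 d hle]; exact hd
      exact he.2 d this hlt
  -- common denominator
  obtain ⟨b, hb⟩ := IsLocalization.exist_integer_multiples (nonZeroDivisors A)
    ((Finset.univ : Finset (Fin k)) ×ˢ T)
    (fun i : Fin k × (Fin n →₀ ℕ) => MvPowerSeries.coeff i.2 (c i.1))
  have hbA : ∀ (l : Fin k) (β : Fin n →₀ ℕ), β ∈ T → ∃ a : A,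
      algebraMap A K a = algebraMap A K (b : A) * MvPowerSeries.coeff β (c l) := by
    intro l β hβ
    obtain ⟨a, ha⟩ := hb (l, β) (by simp [hβ])
    exact ⟨a, by simpa [Algebra.smul_def] using ha⟩
  choose aa haa using hbA
  set H'' : Fin p → MvPowerSeries (Fin n) A := fun j => ∑ l, ∑ β ∈ T.attach,
    MvPowerSeries.monomial β (aa l β.1 β.2) * F l j with hH''
  have hH''M : H'' ∈ M := by
    have : H'' = ∑ l, ∑ β ∈ T.attach,
        (MvPowerSeries.monomial (β : Fin n →₀ ℕ) (aa l β.1 β.2)) • F l := by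
      funext j
      simp only [hH'', Finset.sum_apply, Pi.smul_apply, smul_eq_mul]
    rw [this]
    exact Submodule.sum_mem M fun l _ => Submodule.sum_mem M fun β _ =>
      Submodule.smul_mem M _ (hF l)
  -- Claim 3 : coeff of map H'' equals b * coeff of H'
  have claim3 : ∀ (j : Fin p) (δ : Fin n →₀ ℕ),
      MvPowerSeries.coeff δ (MvPowerSeries.map (algebraMap A K) (H'' j)) =
        algebraMap A K (b : A) * MvPowerSeries.coeff δ (H' j) := by
    intro j δ
    rw [hH'', hH']
    rw [map_sum (MvPowerSeries.map (algebraMap A K)), map_sum, map_sum, Finset.mul_sum]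
    refine Finset.sum_congr rfl fun l _ => ?_
    rw [map_sum (MvPowerSeries.map (algebraMap A K)), map_sum, Finset.sum_mul, map_sum,
      Finset.mul_sum]
    rw [← Finset.sum_attach T (fun β => algebraMap A K ↑b *
      (MvPowerSeries.coeff δ) ((MvPowerSeries.monomial β ((MvPowerSeries.coeff β) (c l))) *
        MvPowerSeries.map (algebraMap A K) (F l j)))]
    refine Finset.sum_congr rfl fun β _ => ?_
    rw [map_mul, MvPowerSeries.map_monomial, haa l β.1 β.2]
    rw [MvPowerSeries.coeff_monomial_mul, MvPowerSeries.coeff_monomial_mul]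
    by_cases hle : (β : Fin n →₀ ℕ) ≤ δ
    · simp only [hle, if_true]; ring
    · simp [hle]
  have hbne : algebraMap A K (b : A) ≠ 0 := by
    have : (b : A) ≠ 0 := nonZeroDivisors.ne_zero b.2
    simpa using fun h => this (IsFractionRing.injective A K (by simpa using h))
  -- Claim 4 : suppT H'' = suppT H'
  have claim4 : ∀ d : Idx n p, d ∈ suppT H'' ↔ d ∈ suppT H' := by
    intro d
    show MvPowerSeries.coeff d.1 (H'' d.2) ≠ 0 ↔ MvPowerSeries.coeff d.1 (H' d.2) ≠ 0
    constructor
    · intro h hc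
      apply h
      have := claim3 d.2 d.1
      rw [MvPowerSeries.coeff_map, hc, mul_zero] at this
      exact IsFractionRing.injective A K (by simpa using this)
    · intro h hc
      apply h
      have := claim3 d.2 d.1
      rw [MvPowerSeries.coeff_map, hc, map_zero, zero_eq_mul] at this
      rcases this with h' | h'
      · exact absurd h' hbne
      · exact h'
  exact ⟨H'', hH''M, ⟨(claim4 e).2 claim2.1, fun d hd => claim2.2 d ((claim4 d).1 hd)⟩⟩


open scoped Classical

variable {n p q : ℕ}

section Division

variable {K : Type*} [Field K]

/-- Initial coefficient of `Ψ i`. -/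
noncomputable def cInit (v : Fin q → Idx n p) (Ψ : Fin q → (Fin p → MvPowerSeries (Fin n) K))
    (i : Fin q) : K :=
  MvPowerSeries.coeff (v i).1 (Ψ i (v i).2)

/-- Quotient series extracted from a coefficient function `f`. -/
noncomputable def Qcoef (v : Fin q → Idx n p) (f : Idx n p → K) (i : Fin q) :
    MvPowerSeries (Fin n) K :=
  fun β => if ((v i).1 + β, (v i).2) ∈ Delta v i then f ((v i).1 + β, (v i).2) else 0

/-- Contribution of the quotients to the coefficient at `e`. -/
noncomputable def conSum (v : Fin q → Idx n p) (Ψ : Fin q → (Fin p → MvPowerSeries (Fin n) K))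
    (f : Idx n p → K) (e : Idx n p) : K :=
  ∑ i : Fin q, ∑ x ∈ Finset.HasAntidiagonal.antidiagonal e.1,
    Qcoef v f i x.1 * MvPowerSeries.coeff x.2 (Ψ i e.2)

/-- Restriction of `f` to indices strictly smaller than `e`. -/
noncomputable def padf (L : Fin n → ℝ) (f : Idx n p → K) (e : Idx n p) : Idx n p → K :=
  fun d => if idxLt L d e then f d else 0

/-- Body of the division recursion. -/
noncomputable def divBody (L : Fin n → ℝ) (v : Fin q → Idx n p)
    (Ψ : Fin q → (Fin p → MvPowerSeries (Fin n) K)) (G : Fin p → MvPowerSeries (Fin n) K)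
    (e : Idx n p) (rec : ∀ d, idxLt L d e → K) : K :=
  let g : Idx n p → K := fun d => if h : idxLt L d e then rec d h else 0
  if h : ∃ i, e ∈ Delta v i then
    (MvPowerSeries.coeff e.1 (G e.2) - conSum v Ψ g e) * (cInit v Ψ h.choose)⁻¹
  else MvPowerSeries.coeff e.1 (G e.2) - conSum v Ψ g e

/-- The division function. -/
noncomputable def divF (L : Fin n → ℝ) (hL : ∀ i, 0 < L i) (v : Fin q → Idx n p)
    (Ψ : Fin q → (Fin p → MvPowerSeries (Fin n) K)) (G : Fin p → MvPowerSeries (Fin n) K) :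
    Idx n p → K :=
  (idxLt_wf (p := p) hL).fix (divBody L v Ψ G)

theorem divF_eq (L : Fin n → ℝ) (hL : ∀ i, 0 < L i) (v : Fin q → Idx n p)
    (Ψ : Fin q → (Fin p → MvPowerSeries (Fin n) K)) (G : Fin p → MvPowerSeries (Fin n) K)
    (e : Idx n p) :
    divF L hL v Ψ G e =
      if h : ∃ i, e ∈ Delta v i then
        (MvPowerSeries.coeff e.1 (G e.2) -
            conSum v Ψ (padf L (divF L hL v Ψ G) e) e) * (cInit v Ψ h.choose)⁻¹
      else MvPowerSeries.coeff e.1 (G e.2) - conSum v Ψ (padf L (divF L hL v Ψ G) e) e := by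
  have hpad : padf L (divF L hL v Ψ G) e
      = fun d => if h : idxLt L d e then divF L hL v Ψ G d else 0 := by
    funext d
    by_cases h : idxLt L d e <;> simp [padf, h]
  rw [hpad]
  conv_lhs => rw [divF, WellFounded.fix_eq]
  rfl

/-- The element of `cone (v i)` determined by `β`. -/
theorem mem_delta_imp_cone {v : Fin q → Idx n p} {e : Idx n p} {i : Fin q}
    (h : e ∈ Delta v i) : e.2 = (v i).2 ∧ (v i).1 ≤ e.1 := by
  obtain ⟨⟨hj, β, hβ⟩, -⟩ := h
  exact ⟨hj, by rw [hβ]; exact le_self_add⟩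

/-- Key diagonal decomposition per index `i`. -/
theorem per_i_decomp {L : Fin n → ℝ} {v : Fin q → Idx n p}
    {Ψ : Fin q → (Fin p → MvPowerSeries (Fin n) K)}
    (hexp : ∀ i, IsExp L (Ψ i) (v i)) (f : Idx n p → K) (e : Idx n p) (i : Fin q) :
    ∑ x ∈ Finset.HasAntidiagonal.antidiagonal e.1,
        Qcoef v f i x.1 * MvPowerSeries.coeff x.2 (Ψ i e.2) =
      (∑ x ∈ Finset.HasAntidiagonal.antidiagonal e.1,
        Qcoef v (padf L f e) i x.1 * MvPowerSeries.coeff x.2 (Ψ i e.2)) +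
      (if e ∈ Delta v i then f e * cInit v Ψ i else 0) := by
  have hsplit : ∀ x : (Fin n →₀ ℕ) × (Fin n →₀ ℕ),
      Qcoef v f i x.1 * MvPowerSeries.coeff x.2 (Ψ i e.2) =
      Qcoef v (padf L f e) i x.1 * MvPowerSeries.coeff x.2 (Ψ i e.2) +
      (Qcoef v f i x.1 - Qcoef v (padf L f e) i x.1) * MvPowerSeries.coeff x.2 (Ψ i e.2) := by
    intro x; ring
  rw [Finset.sum_congr rfl fun x _ => hsplit x, Finset.sum_add_distrib]
  congr 1
  -- the difference sum equals the diagonal term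
  have key : ∀ x ∈ Finset.HasAntidiagonal.antidiagonal e.1,
      (¬ (v i = (x.2, e.2) ∧ ((v i).1 + x.1, (v i).2) ∈ Delta v i)) →
      (Qcoef v f i x.1 - Qcoef v (padf L f e) i x.1) *
        MvPowerSeries.coeff x.2 (Ψ i e.2) = 0 := by
    intro x hx hnot
    by_cases hd : ((v i).1 + x.1, (v i).2) ∈ Delta v i
    · by_cases hc : MvPowerSeries.coeff x.2 (Ψ i e.2) = 0
      · rw [hc, mul_zero]
      · have hsupp : ((x.2, e.2) : Idx n p) ∈ suppT (Ψ i) := hc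
        have hni : ¬ idxLt L ((x.2, e.2) : Idx n p) (v i) := (hexp i).2 _ hsupp
        have hne : v i ≠ ((x.2, e.2) : Idx n p) := fun hEq => hnot ⟨hEq, hd⟩
        have hlt : idxLt L (v i) ((x.2, e.2) : Idx n p) := by
          rcases idxLt_total hne with h | h
          · exact h
          · exact absurd h hni
        have hlt2 : idxLt L ((v i).1 + x.1, (v i).2) e := by
          have := (idxLt_add_iff (L := L) (a := v i) (b := ((x.2, e.2) : Idx n p)) x.1).2 hlt
          have he1 : x.2 + x.1 = e.1 := by
            have := Finset.HasAntidiagonal.mem_antidiagonal.1 hx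
            rw [add_comm]; exact this
          rw [he1] at this
          exact (by simpa using this : idxLt L ((v i).1 + x.1, (v i).2) (e.1, e.2)).imp
            (fun h => h) (fun h => h)
        have : padf L f e ((v i).1 + x.1, (v i).2) = f ((v i).1 + x.1, (v i).2) := by
          simp [padf, hlt2]
        simp only [Qcoef, hd, if_true, this, sub_self, zero_mul]
    · simp only [Qcoef, hd, if_false, sub_self, zero_mul]
  by_cases hmem : e ∈ Delta v i
  · obtain ⟨hj, hle⟩ := mem_delta_imp_cone hmem
    set x0 : (Fin n →₀ ℕ) × (Fin n →₀ ℕ) := (e.1 - (v i).1, (v i).1) with hx0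
    have hx0mem : x0 ∈ Finset.HasAntidiagonal.antidiagonal e.1 :=
      Finset.HasAntidiagonal.mem_antidiagonal.2 (tsub_add_cancel_of_le hle)
    rw [Finset.sum_eq_single_of_mem x0 hx0mem, if_pos hmem]
    · have hd0 : ((v i).1 + x0.1, (v i).2) = e := by
        have : (v i).1 + (e.1 - (v i).1) = e.1 := add_tsub_cancel_of_le hle
        rw [hx0]
        exact Prod.ext (by simpa using this) hj.symm
      have hpad : padf L f e e = 0 := by simp [padf, idxLt_irrefl]
      simp only [Qcoef, hd0, hmem, if_true, hpad]
      have hc0 : MvPowerSeries.coeff x0.2 (Ψ i e.2) = cInit v Ψ i := by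
        rw [hx0, hj]; rfl
      rw [hc0]; ring
    · intro x hx hne
      refine key x hx ?_
      rintro ⟨hEq, hd⟩
      apply hne
      have hx2 : x.2 = (v i).1 := by rw [hEq]
      have hx1 : x.1 = e.1 - (v i).1 := by
        have := Finset.HasAntidiagonal.mem_antidiagonal.1 hx
        rw [hx2] at this
        exact eq_tsub_of_add_eq this
      exact Prod.ext hx1 hx2
  · rw [if_neg hmem]
    refine Finset.sum_eq_zero fun x hx => ?_
    refine key x hx ?_
    rintro ⟨hEq, hd⟩
    apply hmem
    have he1 : x.2 + x.1 = e.1 := by rw [add_comm]; exact Finset.HasAntidiagonal.mem_antidiagonal.1 hx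
    have hd0 : ((v i).1 + x.1, (v i).2) = e := by
      have h1 : (v i).1 = x.2 := by rw [hEq]
      have h2 : (v i).2 = e.2 := by rw [hEq]
      refine Prod.ext ?_ h2
      simp only [h1]
      exact he1
    rwa [hd0] at hd

/-- Decomposition of the full contribution. -/
theorem conSum_decomp {L : Fin n → ℝ} {v : Fin q → Idx n p}
    {Ψ : Fin q → (Fin p → MvPowerSeries (Fin n) K)}
    (hexp : ∀ i, IsExp L (Ψ i) (v i)) (f : Idx n p → K) (e : Idx n p) :
    conSum v Ψ f e = conSum v Ψ (padf L f e) e +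
      (if h : ∃ i, e ∈ Delta v i then f e * cInit v Ψ h.choose else 0) := by
  unfold conSum
  rw [Finset.sum_congr rfl fun i _ => per_i_decomp hexp f e i, Finset.sum_add_distrib]
  congr 1
  by_cases h : ∃ i, e ∈ Delta v i
  · rw [dif_pos h]
    refine Finset.sum_eq_single_of_mem h.choose (Finset.mem_univ _) ?_ |>.trans ?_
    · intro i _ hne
      rw [if_neg]
      intro hmem
      exact hne (delta_disjoint hmem h.choose_spec)
    · rw [if_pos h.choose_spec]
  · rw [dif_neg h, Finset.sum_eq_zero]
    intro i _
    rw [if_neg (fun hmem => h ⟨i, hmem⟩)]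

/-- The main coefficient identity for the division. -/
theorem div_coeff_identity {L : Fin n → ℝ} (hL : ∀ i, 0 < L i) {v : Fin q → Idx n p}
    {Ψ : Fin q → (Fin p → MvPowerSeries (Fin n) K)}
    (hexp : ∀ i, IsExp L (Ψ i) (v i)) (hc : ∀ i, cInit v Ψ i ≠ 0)
    (G : Fin p → MvPowerSeries (Fin n) K) (e : Idx n p) :
    MvPowerSeries.coeff e.1 (G e.2) =
      conSum v Ψ (divF L hL v Ψ G) e +
        (if ∃ i, e ∈ Delta v i then 0 else divF L hL v Ψ G e) := by
  set f := divF L hL v Ψ G with hf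
  rw [conSum_decomp hexp f e]
  by_cases h : ∃ i, e ∈ Delta v i
  · rw [dif_pos h, if_pos h]
    have := divF_eq L hL v Ψ G e
    rw [dif_pos h] at this
    rw [← hf] at this
    rw [this, inv_mul_cancel_right₀ (hc h.choose)]
    ring
  · rw [dif_neg h, if_neg h]
    have := divF_eq L hL v Ψ G e
    rw [dif_neg h] at this
    rw [← hf] at this
    rw [this]
    ring

end Division


open scoped Classical

variable {n p q : ℕ}

theorem division_exists {K : Type*} [Field K] {L : Fin n → ℝ} (hL : ∀ i, 0 < L i)
    {v : Fin q → Idx n p} {Ψ : Fin q → (Fin p → MvPowerSeries (Fin n) K)}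
    (hexp : ∀ i, IsExp L (Ψ i) (v i))
    (B : Subring K) (hinv : ∀ i, (cInit v Ψ i)⁻¹ ∈ B)
    (hΨB : ∀ i, coeffsInT (· ∈ B) (Ψ i))
    (G : Fin p → MvPowerSeries (Fin n) K) (hG : coeffsInT (· ∈ B) G) :
    ∃ (Q : Fin q → MvPowerSeries (Fin n) K) (R : Fin p → MvPowerSeries (Fin n) K),
      (∀ i, coeffsIn (· ∈ B) (Q i)) ∧ coeffsInT (· ∈ B) R ∧
      (∀ j, G j = ∑ i, Q i * Ψ i j + R j) ∧
      (∀ i, ∀ β ∈ suppS (Q i), ((v i).1 + β, (v i).2) ∈ Delta v i) ∧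
      suppT R ⊆ DeltaC v := by
  have hc : ∀ i, cInit v Ψ i ≠ 0 := fun i => (hexp i).1
  obtain ⟨f, hfdef⟩ : ∃ f, f = divF L hL v Ψ G := ⟨_, rfl⟩
  -- all values of f lie in B
  have hfB : ∀ e, f e ∈ B := by
    intro e
    induction e using WellFounded.induction (idxLt_wf (p := p) hL) with
    | _ e IH =>
    have hcon : conSum v Ψ (padf L f e) e ∈ B := by
      refine Subring.sum_mem B fun i _ => Subring.sum_mem B fun x _ =>
        B.mul_mem ?_ (hΨB i e.2 x.2)
      show Qcoef v (padf L f e) i x.1 ∈ B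
      unfold Qcoef padf
      split
      · split
        · exact IH _ ‹_›
        · exact B.zero_mem
      · exact B.zero_mem
    rw [hfdef, divF_eq, ← hfdef]
    split
    · exact B.mul_mem (B.sub_mem (hG e.2 e.1) hcon) (hinv _)
    · exact B.sub_mem (hG e.2 e.1) hcon
  have hid := div_coeff_identity hL hexp hc G
  rw [← hfdef] at hid
  refine ⟨fun i => Qcoef v f i,
    fun j => (fun δ => if ∃ i, ((δ, j) : Idx n p) ∈ Delta v i then 0 else f (δ, j) :
      MvPowerSeries (Fin n) K), ?_, ?_, ?_, ?_, ?_⟩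
  · intro i β
    show Qcoef v f i β ∈ B
    unfold Qcoef
    split
    · exact hfB _
    · exact B.zero_mem
  · intro j δ
    show (if ∃ i, ((δ, j) : Idx n p) ∈ Delta v i then 0 else f (δ, j)) ∈ B
    split
    · exact B.zero_mem
    · exact hfB _
  · intro j
    ext δ
    show MvPowerSeries.coeff δ (G j) = MvPowerSeries.coeff δ (∑ i, Qcoef v f i * Ψ i j +
      (show MvPowerSeries (Fin n) K from
        fun δ => if ∃ i, ((δ, j) : Idx n p) ∈ Delta v i then 0 else f (δ, j)))
    rw [map_add, map_sum]
    have h1 : ∑ i, MvPowerSeries.coeff δ (Qcoef v f i * Ψ i j) = conSum v Ψ f (δ, j) := by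
      unfold conSum
      exact Finset.sum_congr rfl fun i _ => MvPowerSeries.coeff_mul δ _ _
    rw [h1]
    exact hid (δ, j)
  · intro i β hβ
    have h : Qcoef v f i β ≠ 0 := hβ
    unfold Qcoef at h
    by_contra hnot
    rw [if_neg hnot] at h
    exact h rfl
  · intro d hd
    have h : (if ∃ i, ((d.1, d.2) : Idx n p) ∈ Delta v i then 0 else f (d.1, d.2)) ≠ 0 := hd
    have hnot : ¬ ∃ i, ((d.1, d.2) : Idx n p) ∈ Delta v i := by
      intro hex
      rw [if_pos hex] at h
      exact h rfl
    show d ∈ DeltaC v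
    intro hmem
    obtain ⟨i, hi⟩ := Set.mem_iUnion.1 hmem
    obtain ⟨k, hk⟩ := mem_delta_of_mem_cone ⟨i, hi⟩
    exact hnot ⟨k, hk⟩

end QDiv

namespace QDiv

/-- **Corollary 2.3(1).** Let `M` be a nonzero submodule of `A[[x]]^p`, let `(α_i,j_i)`
be the vertices of `N(M)`, and let `Φ_i ∈ M` with `exp Φ_i = (α_i,j_i)`. Then:
(a) `N(M) = Δ_1 ∪ ⋯ ∪ Δ_q`; (b) `Φ_1,…,Φ_q` generate `B[[x]]⋅M`; (c) `G ∈ B[[x]]⋅M`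
if and only if the remainder of the formal division of `G` by `Φ_1,…,Φ_q` is `0`. -/
theorem diagram_generators_and_membership
    {n p q : ℕ} (hn : 0 < n) (hp : 0 < p)
    {A : Type*} [CommRing A] [IsDomain A]
    {K : Type*} [Field K] [Algebra A K] [IsFractionRing A K]
    (L : Fin n → ℝ) (hL : ∀ i, 0 < L i)
    (M : Submodule (MvPowerSeries (Fin n) A) (Fin p → MvPowerSeries (Fin n) A))
    (hM : M ≠ ⊥)
    (v : Fin q → Idx n p)
    (hvmono : ∀ i k : Fin q, i < k → idxLt L (v i) (v k))
    (hvert : ∀ e : Idx n p, IsVertex (diagram L M) e ↔ ∃ i, v i = e)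
    (Φ : Fin q → (Fin p → MvPowerSeries (Fin n) A))
    (hΦM : ∀ i, Φ i ∈ M) (hΦexp : ∀ i, IsExp L (Φ i) (v i))
    (B : Subring K)
    (hAB : ∀ a : A, algebraMap A K a ∈ B)
    (hSB : ∀ i, (algebraMap A K (MvPowerSeries.coeff (v i).1 (Φ i (v i).2)))⁻¹ ∈ B) :
    -- (a)
    diagram L M = (⋃ i, Delta v i) ∧
    -- (b): Φ_1,…,Φ_q generate the B[[x]]-submodule of B[[x]]^p generated by M
    (∀ G : Fin p → MvPowerSeries (Fin n) K,
      inSpanP (· ∈ B)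
          ((fun F : Fin p → MvPowerSeries (Fin n) A =>
              fun j => MvPowerSeries.map (algebraMap A K) (F j)) ''
            (M : Set (Fin p → MvPowerSeries (Fin n) A))) G ↔
        ∃ c : Fin q → MvPowerSeries (Fin n) K,
          (∀ i, coeffsIn (· ∈ B) (c i)) ∧
          ∀ j, G j = ∑ i, c i * MvPowerSeries.map (algebraMap A K) (Φ i j)) ∧
    -- (c): G ∈ B[[x]]⋅M iff the division remainder R(G) vanishes
    (∀ G : Fin p → MvPowerSeries (Fin n) K, coeffsInT (· ∈ B) G →
      ∀ (Q : Fin q → MvPowerSeries (Fin n) K) (R : Fin p → MvPowerSeries (Fin n) K),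
        (∀ i, coeffsIn (· ∈ B) (Q i)) → coeffsInT (· ∈ B) R →
        (∀ j, G j =
          (∑ i, Q i * MvPowerSeries.map (algebraMap A K) (Φ i j)) + R j) →
        (∀ i, ∀ β ∈ suppS (Q i), ((v i).1 + β, (v i).2) ∈ Delta v i) →
        suppT R ⊆ DeltaC v →
        (inSpanP (· ∈ B)
            ((fun F : Fin p → MvPowerSeries (Fin n) A =>
                fun j => MvPowerSeries.map (algebraMap A K) (F j)) ''
              (M : Set (Fin p → MvPowerSeries (Fin n) A))) G ↔ R = 0)) := by
  have inj : Function.Injective (algebraMap A K) := IsFractionRing.injective A K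
  -- part (a)
  have ha : diagram L M = ⋃ i, Delta v i := part_a hvert hΦM hΦexp
  -- the mapped generators over K
  have hsuppmap : ∀ (F : Fin p → MvPowerSeries (Fin n) A) (d : Idx n p),
      d ∈ suppT (fun j => MvPowerSeries.map (algebraMap A K) (F j)) ↔ d ∈ suppT F := by
    intro F d
    show MvPowerSeries.coeff d.1 (MvPowerSeries.map (algebraMap A K) (F d.2)) ≠ 0 ↔ _
    rw [MvPowerSeries.coeff_map]
    exact not_congr (map_eq_zero_iff _ inj)
  have hexpK : ∀ i, IsExp L
      (fun j => MvPowerSeries.map (algebraMap A K) (Φ i j)) (v i) := by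
    intro i
    exact ⟨(hsuppmap (Φ i) (v i)).2 (hΦexp i).1,
      fun d hd => (hΦexp i).2 d ((hsuppmap (Φ i) d).1 hd)⟩
  -- part (c)
  have hpc : ∀ G : Fin p → MvPowerSeries (Fin n) K, coeffsInT (· ∈ B) G →
      ∀ (Q : Fin q → MvPowerSeries (Fin n) K) (R : Fin p → MvPowerSeries (Fin n) K),
        (∀ i, coeffsIn (· ∈ B) (Q i)) → coeffsInT (· ∈ B) R →
        (∀ j, G j =
          (∑ i, Q i * MvPowerSeries.map (algebraMap A K) (Φ i j)) + R j) →
        (∀ i, ∀ β ∈ suppS (Q i), ((v i).1 + β, (v i).2) ∈ Delta v i) →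
        suppT R ⊆ DeltaC v →
        (inSpanP (· ∈ B)
            ((fun F : Fin p → MvPowerSeries (Fin n) A =>
                fun j => MvPowerSeries.map (algebraMap A K) (F j)) ''
              (M : Set (Fin p → MvPowerSeries (Fin n) A))) G ↔ R = 0) := by
    intro G hGB Q R hQB hRB hsum hQs hRs
    constructor
    · intro hspan
      obtain ⟨k, c, m, hcB, hmM, hsumG⟩ := hspan
      choose F hFM hFeq using hmM
      by_contra hR0
      have hnall : ¬ ∀ d : Idx n p, MvPowerSeries.coeff d.1 (R d.2) = 0 := by
        intro hall
        exact hR0 (funext fun j => MvPowerSeries.ext fun δ => by simpa using hall (δ, j))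
      obtain ⟨d, hd⟩ := not_forall.1 hnall
      obtain ⟨e, hexpR⟩ := exists_isExp_of_mem hL (hd : d ∈ suppT R)
      have heR : e ∈ suppT R := hexpR.1
      have hRrep : R = fun j => ∑ l : Fin (k + q),
          (Fin.append c (fun i => -(Q i))) l *
            MvPowerSeries.map (algebraMap A K) ((Fin.append F Φ) l j) := by
        funext j
        rw [Fin.sum_univ_add]
        simp only [Fin.append_left, Fin.append_right]
        have hGj : G j = ∑ l, c l * MvPowerSeries.map (algebraMap A K) (F l j) := by
          rw [hsumG j]
          exact Finset.sum_congr rfl fun l _ =>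
            congrArg (c l * ·) (congrFun (hFeq l) j).symm
        have hr : R j = G j - ∑ i, Q i * MvPowerSeries.map (algebraMap A K) (Φ i j) := by
          rw [hsum j]; ring
        rw [hr, hGj]
        rw [sub_eq_add_neg, ← Finset.sum_neg_distrib]
        congr 1
        exact Finset.sum_congr rfl fun i _ => by ring
      have hFM' : ∀ l : Fin (k + q), (Fin.append F Φ) l ∈ M := by
        intro l
        refine Fin.addCases (motive := fun l => (Fin.append F Φ) l ∈ M) ?_ ?_ l
        · intro i; rw [Fin.append_left]; exact hFM i
        · intro i; rw [Fin.append_right]; exact hΦM i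
      rw [hRrep] at hexpR
      have hmem := exp_mem_diagram hL _ _ hFM' hexpR
      rw [ha, iUnion_delta_eq_cones] at hmem
      exact (hRs heR) hmem
    · intro hR0
      refine ⟨q, Q, fun i => fun j => MvPowerSeries.map (algebraMap A K) (Φ i j),
        hQB, fun i => ⟨Φ i, hΦM i, rfl⟩, fun j => ?_⟩
      have := hsum j
      rw [hR0] at this
      simpa using this
  refine ⟨ha, ?_, hpc⟩
  -- part (b)
  intro G
  constructor
  · intro hspan
    have hGB : coeffsInT (· ∈ B) G := by
      obtain ⟨k, c, m, hcB, hmM, hsumG⟩ := hspan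
      choose F hFM hFeq using hmM
      intro j δ
      rw [hsumG j, map_sum]
      refine Subring.sum_mem B fun l _ => ?_
      rw [MvPowerSeries.coeff_mul]
      refine Subring.sum_mem B fun x _ => B.mul_mem (hcB l x.1) ?_
      have hm : m l j = MvPowerSeries.map (algebraMap A K) (F l j) :=
        (congrFun (hFeq l) j).symm
      rw [hm, MvPowerSeries.coeff_map]
      exact hAB _
    obtain ⟨Q, R, hQB, hRB, hsum, hQs, hRs⟩ := division_exists hL hexpK B
      (fun i => by
        have hco : cInit v (fun i => fun j => MvPowerSeries.map (algebraMap A K) (Φ i j)) i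
            = algebraMap A K (MvPowerSeries.coeff (v i).1 (Φ i (v i).2)) :=
          MvPowerSeries.coeff_map _ _ _
        rw [hco]
        exact hSB i)
      (fun i j δ => by
        show MvPowerSeries.coeff δ (MvPowerSeries.map (algebraMap A K) (Φ i j)) ∈ B
        rw [MvPowerSeries.coeff_map]
        exact hAB _)
      G hGB
    have hR0 := (hpc G hGB Q R hQB hRB hsum hQs hRs).1 hspan
    refine ⟨Q, hQB, fun j => ?_⟩
    have := hsum j
    rw [hR0] at this
    simpa using this
  · rintro ⟨c, hcB, hsumG⟩
    exact ⟨q, c, fun i => fun j => MvPowerSeries.map (algebraMap A K) (Φ i j),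
      hcB, fun i => ⟨Φ i, hΦM i, rfl⟩, hsumG⟩

end QDiv
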